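/- If u is a nonconstant continuous function on a connected planar domain Ω with the local median value property, then no point x ∈ Ω satisfying the local median value property can be an isolated point of its level set u⁻¹(u(x)). -/

import Mathlib

open MeasureTheory Set Metric Real Filter Topology

/-- `m` is a median of `u` over the circle `∂B(x,r)` with respect to arclength measure,
parametrized by `θ ↦ x + r e^{iθ}`. -/
def IsCircleMedian (x : ℂ) (r : ℝ) (u : ℂ → ℝ) (m : ℝ) : Prop :=
  volume (Ioc (0:ℝ) (2*π)) / 2 ≤ volume {θ ∈ Ioc (0:ℝ) (2*π) | m ≤ u (circleMap x r θ)} ∧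
  volume (Ioc (0:ℝ) (2*π)) / 2 ≤ volume {θ ∈ Ioc (0:ℝ) (2*π) | u (circleMap x r θ) ≤ m}

/-- `u` has the local median value property on `Ω`. -/
def HasLMVP (Ω : Set ℂ) (u : ℂ → ℝ) : Prop :=
  ∃ R : ℂ → ℝ, ContinuousOn R Ω ∧
    (∀ x ∈ Ω, 0 < R x ∧ R x ≤ Metric.infDist x Ωᶜ) ∧
    (∀ x ∈ Ω, ∀ r : ℝ, 0 < r → r ≤ R x → IsCircleMedian x r u (u x))

theorem no_isolated_level_point (Ω : Set ℂ) (hΩ : IsOpen Ω) (hconn : IsConnected Ω)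
    (u : ℂ → ℝ) (hu : ContinuousOn u Ω) (hlmvp : HasLMVP Ω u)
    (hnc : ¬ ∀ x ∈ Ω, ∀ y ∈ Ω, u x = u y) :
    ∀ x ∈ Ω, ∀ ε > (0:ℝ), ∃ y ∈ ball x ε, y ≠ x ∧ u y = u x := by
  intro x hx ε hε
  obtain ⟨R, hRcont, hRpos, hmed⟩ := hlmvp
  obtain ⟨hR0, hRle⟩ := hRpos x hx
  set r : ℝ := min ε (R x) / 2 with hrdef
  have hr0 : 0 < r := by
    have := lt_min hε hR0
    positivity
  have hrR : r ≤ R x := by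
    have : min ε (R x) ≤ R x := min_le_right _ _
    simp only [hrdef]; linarith
  have hrε : r < ε := by
    have : min ε (R x) ≤ ε := min_le_left _ _
    simp only [hrdef]; linarith
  have hsub : sphere x r ⊆ Ω := by
    intro y hy
    by_contra hyΩ
    have h1 : Metric.infDist x Ωᶜ ≤ dist x y := Metric.infDist_le_dist_of_mem hyΩ
    have h2 : dist x y = r := by rw [dist_comm]; exact mem_sphere.mp hy
    have : R x < r := by
      have : min ε (R x) ≤ R x := min_le_right _ _
      linarith [lt_min hε hR0]
    linarith
  obtain ⟨hA, hB⟩ := hmed x hx r hr0 hrR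
  have hπ : (0:ENNReal) < volume (Ioc (0:ℝ) (2*π)) / 2 := by
    rw [Real.volume_Ioc]
    have : (0:ℝ) < 2 * π := by positivity
    simp only [sub_zero]
    exact ENNReal.div_pos (by simp [ENNReal.ofReal_pos, this, Real.pi_pos]) (by norm_num)
  obtain ⟨θ₁, hθ₁⟩ := nonempty_of_measure_ne_zero (ne_of_gt (lt_of_lt_of_le hπ hA))
  obtain ⟨θ₂, hθ₂⟩ := nonempty_of_measure_ne_zero (ne_of_gt (lt_of_lt_of_le hπ hB))
  have hmaps : ∀ θ : ℝ, circleMap x r θ ∈ Ω := fun θ =>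
    hsub (circleMap_mem_sphere x hr0.le θ)
  have hf : ContinuousOn (fun θ : ℝ => u (circleMap x r θ)) (uIcc θ₂ θ₁) :=
    (hu.comp (continuous_circleMap x r).continuousOn (fun θ _ => hmaps θ)).mono
      (subset_univ _)
  have hmem : u x ∈ Icc (u (circleMap x r θ₂)) (u (circleMap x r θ₁)) :=
    ⟨hθ₂.2, hθ₁.2⟩
  obtain ⟨θ, _, hθ⟩ := intermediate_value_uIcc hf (Icc_subset_uIcc hmem)
  refine ⟨circleMap x r θ, ?_, ?_, hθ⟩
  · rw [mem_ball]
    have : circleMap x r θ ∈ sphere x r := circleMap_mem_sphere x hr0.le θ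
    rw [mem_sphere] at this
    rw [this]; exact hrε
  · intro h
    have : circleMap x r θ ∈ sphere x r := circleMap_mem_sphere x hr0.le θ
    rw [mem_sphere] at this
    rw [h] at this
    simp at this
    exact hr0.ne' this.symm
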